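/- Let H be a weak Hopf algebra over a commutative ring k with antipode ν, target map t(a)=ε(1₍₁₎ a)1₍₂₎ and r(a)=1₍₁₎ε(1₍₂₎ a). Then ν∘t = r∘ν = r∘t and ν∘r = t∘ν = t∘r. -/
import Mathlib


open TensorProduct

noncomputable section

variable {k : Type*} [CommRing k] {A : Type*} [Ring A] [Algebra k A]

/-- Given `x z : A`, the linear functional on `A ⊗ A` sending `y₁ ⊗ y₂` to
`ε(x·y₁)·ε(y₂·z)` (used to state the weakened counit axiom in Sweedler form). -/
def sweedlerCounit (ε : A →ₗ[k] k) (x z : A) : A ⊗[k] A →ₗ[k] k :=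
  LinearMap.mul' k k ∘ₗ TensorProduct.map
    (ε ∘ₗ LinearMap.mul' k A ∘ₗ TensorProduct.mk k A A x)
    (ε ∘ₗ LinearMap.mul' k A ∘ₗ (TensorProduct.mk k A A).flip z)

/-- A weak bialgebra structure on the `k`-algebra `A`: a coassociative counital
coalgebra `(δ, ε)` such that `δ` is multiplicative, together with the weakened
unit axiom and the weakened counit axiom. -/
structure IsWeakBialgebra (δ : A →ₗ[k] A ⊗[k] A) (ε : A →ₗ[k] k) : Prop where
  coassoc : (TensorProduct.assoc k A A A).toLinearMap ∘ₗ
      TensorProduct.map δ LinearMap.id ∘ₗ δ = TensorProduct.map LinearMap.id δ ∘ₗ δ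
  counit_left : (TensorProduct.lid k A).toLinearMap ∘ₗ
      TensorProduct.map ε LinearMap.id ∘ₗ δ = LinearMap.id
  counit_right : (TensorProduct.rid k A).toLinearMap ∘ₗ
      TensorProduct.map LinearMap.id ε ∘ₗ δ = LinearMap.id
  mul_compat : ∀ x y : A, δ (x * y) = δ x * δ y
  weak_unit₁ : TensorProduct.map δ LinearMap.id (δ 1) =
      (δ 1 ⊗ₜ[k] (1 : A)) * ((TensorProduct.assoc k A A A).symm ((1 : A) ⊗ₜ[k] δ 1))
  weak_unit₂ : TensorProduct.map δ LinearMap.id (δ 1) =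
      ((TensorProduct.assoc k A A A).symm ((1 : A) ⊗ₜ[k] δ 1)) * (δ 1 ⊗ₜ[k] (1 : A))
  weak_counit₁ : ∀ x y z : A, ε (x * y * z) = sweedlerCounit ε x z (δ y)
  weak_counit₂ : ∀ x y z : A, ε (x * y * z) =
      sweedlerCounit ε x z (TensorProduct.comm k A A (δ y))

/-- The target map `t(a) = ε(1₍₁₎ a) 1₍₂₎ = (ε ⊗ 1)(δ(1)·(a ⊗ 1))`. -/
def targetMap (δ : A →ₗ[k] A ⊗[k] A) (ε : A →ₗ[k] k) : A →ₗ[k] A :=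
  (TensorProduct.lid k A).toLinearMap ∘ₗ TensorProduct.map ε LinearMap.id ∘ₗ
    LinearMap.mulLeft k (δ 1) ∘ₗ (TensorProduct.mk k A A).flip 1

/-- The source map `s(a) = 1₍₁₎ ε(a 1₍₂₎) = (1 ⊗ ε)((1 ⊗ a)·δ(1))`. -/
def sourceMap (δ : A →ₗ[k] A ⊗[k] A) (ε : A →ₗ[k] k) : A →ₗ[k] A :=
  (TensorProduct.rid k A).toLinearMap ∘ₗ TensorProduct.map LinearMap.id ε ∘ₗ
    LinearMap.mulRight k (δ 1) ∘ₗ TensorProduct.mk k A A 1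

/-- The map `r(a) = 1₍₁₎ ε(1₍₂₎ a) = (1 ⊗ ε)(δ(1)·(1 ⊗ a))` (the "usual" source map). -/
def rMap (δ : A →ₗ[k] A ⊗[k] A) (ε : A →ₗ[k] k) : A →ₗ[k] A :=
  (TensorProduct.rid k A).toLinearMap ∘ₗ TensorProduct.map LinearMap.id ε ∘ₗ
    LinearMap.mulLeft k (δ 1) ∘ₗ TensorProduct.mk k A A 1

/-- `ν : A → A` is an antipode for the weak bialgebra `(A, δ, ε)`:
`ν(a₍₁₎)a₍₂₎ = t(a)`, `a₍₁₎ν(a₍₂₎) = r(a)` and `ν(a₍₁₎)a₍₂₎ν(a₍₃₎) = ν(a)`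
(i.e. `ν*1 = t`, `1*ν = r`, `ν*1*ν = ν` for the convolution product). -/
def IsAntipode (δ : A →ₗ[k] A ⊗[k] A) (ε : A →ₗ[k] k) (ν : A →ₗ[k] A) : Prop :=
  (∀ a : A, LinearMap.mul' k A (TensorProduct.map ν LinearMap.id (δ a)) = targetMap δ ε a) ∧
  (∀ a : A, LinearMap.mul' k A (TensorProduct.map LinearMap.id ν (δ a)) = rMap δ ε a) ∧
  (∀ a : A, LinearMap.mul' k A (TensorProduct.map (LinearMap.mul' k A) LinearMap.id
      (TensorProduct.map (TensorProduct.map ν LinearMap.id) ν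
        (TensorProduct.map δ LinearMap.id (δ a)))) = ν a)

section Aux

variable (δ : A →ₗ[k] A ⊗[k] A) (ε : A →ₗ[k] k) (ν : A →ₗ[k] A)
theorem eps_mul_t (h : IsWeakBialgebra δ ε) (a b : A) :
    ε (a * targetMap δ ε b) = ε (a * b) := by
  have h2 := h.weak_counit₂ a 1 b
  rw [mul_one] at h2
  rw [h2]
  have key : (ε ∘ₗ LinearMap.mulLeft k a ∘ₗ (TensorProduct.lid k A).toLinearMap ∘ₗ
        TensorProduct.map ε LinearMap.id ∘ₗ LinearMap.mulRight k (b ⊗ₜ[k] (1:A)))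
      = sweedlerCounit ε a b ∘ₗ (TensorProduct.comm k A A).toLinearMap := by
    apply TensorProduct.ext'
    intro x y
    simp [sweedlerCounit, Algebra.TensorProduct.tmul_mul_tmul]
    ring
  exact LinearMap.congr_fun key (δ 1)

theorem eps_mul_r (h : IsWeakBialgebra δ ε) (a b : A) :
    ε (a * rMap δ ε b) = ε (a * b) := by
  have h2 := h.weak_counit₁ a 1 b
  rw [mul_one] at h2
  rw [h2]
  have key : (ε ∘ₗ LinearMap.mulLeft k a ∘ₗ (TensorProduct.rid k A).toLinearMap ∘ₗ
        TensorProduct.map LinearMap.id ε ∘ₗ LinearMap.mulRight k ((1:A) ⊗ₜ[k] b))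
      = sweedlerCounit ε a b := by
    apply TensorProduct.ext'
    intro x y
    simp [sweedlerCounit, Algebra.TensorProduct.tmul_mul_tmul]
    ring
  exact LinearMap.congr_fun key (δ 1)

-- r ∘ t = r
theorem r_t (h : IsWeakBialgebra δ ε) (b : A) :
    rMap δ ε (targetMap δ ε b) = rMap δ ε b := by
  have key : ((TensorProduct.rid k A).toLinearMap ∘ₗ TensorProduct.map LinearMap.id ε ∘ₗ
        LinearMap.mulRight k ((1:A) ⊗ₜ[k] targetMap δ ε b))
      = ((TensorProduct.rid k A).toLinearMap ∘ₗ TensorProduct.map LinearMap.id ε ∘ₗ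
        LinearMap.mulRight k ((1:A) ⊗ₜ[k] b)) := by
    apply TensorProduct.ext'
    intro x y
    simp [Algebra.TensorProduct.tmul_mul_tmul, eps_mul_t δ ε h y b]
  exact LinearMap.congr_fun key (δ 1)

-- t ∘ r = t
theorem t_r (h : IsWeakBialgebra δ ε) (b : A) :
    targetMap δ ε (rMap δ ε b) = targetMap δ ε b := by
  have key : ((TensorProduct.lid k A).toLinearMap ∘ₗ TensorProduct.map ε LinearMap.id ∘ₗ
        LinearMap.mulRight k ((rMap δ ε b) ⊗ₜ[k] (1:A)))
      = ((TensorProduct.lid k A).toLinearMap ∘ₗ TensorProduct.map ε LinearMap.id ∘ₗ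
        LinearMap.mulRight k (b ⊗ₜ[k] (1:A))) := by
    apply TensorProduct.ext'
    intro x y
    simp [Algebra.TensorProduct.tmul_mul_tmul, eps_mul_r δ ε h x b]
  exact LinearMap.congr_fun key (δ 1)

-- t ∘ t = t
theorem t_t (h : IsWeakBialgebra δ ε) (b : A) :
    targetMap δ ε (targetMap δ ε b) = targetMap δ ε b := by
  have key : ((TensorProduct.lid k A).toLinearMap ∘ₗ TensorProduct.map ε LinearMap.id ∘ₗ
        LinearMap.mulRight k ((targetMap δ ε b) ⊗ₜ[k] (1:A)))
      = ((TensorProduct.lid k A).toLinearMap ∘ₗ TensorProduct.map ε LinearMap.id ∘ₗ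
        LinearMap.mulRight k (b ⊗ₜ[k] (1:A))) := by
    apply TensorProduct.ext'
    intro x y
    simp [Algebra.TensorProduct.tmul_mul_tmul, eps_mul_t δ ε h x b]
  exact LinearMap.congr_fun key (δ 1)

-- t(x * r b) = t(x * b)
theorem t_mul_r (h : IsWeakBialgebra δ ε) (c b : A) :
    targetMap δ ε (c * rMap δ ε b) = targetMap δ ε (c * b) := by
  have key : ((TensorProduct.lid k A).toLinearMap ∘ₗ TensorProduct.map ε LinearMap.id ∘ₗ
        LinearMap.mulRight k ((c * rMap δ ε b) ⊗ₜ[k] (1:A)))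
      = ((TensorProduct.lid k A).toLinearMap ∘ₗ TensorProduct.map ε LinearMap.id ∘ₗ
        LinearMap.mulRight k ((c * b) ⊗ₜ[k] (1:A))) := by
    apply TensorProduct.ext'
    intro x y
    have := eps_mul_r δ ε h (x * c) b
    simp [Algebra.TensorProduct.tmul_mul_tmul, ← mul_assoc, this]
  exact LinearMap.congr_fun key (δ 1)

-- r(x * r b) = r(x * b)
theorem r_mul_r (h : IsWeakBialgebra δ ε) (c b : A) :
    rMap δ ε (c * rMap δ ε b) = rMap δ ε (c * b) := by
  have key : ((TensorProduct.rid k A).toLinearMap ∘ₗ TensorProduct.map LinearMap.id ε ∘ₗ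
        LinearMap.mulRight k ((1:A) ⊗ₜ[k] (c * rMap δ ε b)))
      = ((TensorProduct.rid k A).toLinearMap ∘ₗ TensorProduct.map LinearMap.id ε ∘ₗ
        LinearMap.mulRight k ((1:A) ⊗ₜ[k] (c * b))) := by
    apply TensorProduct.ext'
    intro x y
    have := eps_mul_r δ ε h (y * c) b
    simp [Algebra.TensorProduct.tmul_mul_tmul, ← mul_assoc, this]
  exact LinearMap.congr_fun key (δ 1)

-- e is idempotent
theorem e_idem (h : IsWeakBialgebra δ ε) : δ 1 * δ 1 = δ 1 := by
  have := h.mul_compat 1 1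
  rw [mul_one] at this
  exact this.symm

-- coassociativity at 1, in symm form
theorem coassoc_e (h : IsWeakBialgebra δ ε) :
    TensorProduct.map δ LinearMap.id (δ 1) =
      (TensorProduct.assoc k A A A).symm (TensorProduct.map LinearMap.id δ (δ 1)) := by
  have := LinearMap.congr_fun h.coassoc 1
  simp only [LinearMap.coe_comp, Function.comp_apply, LinearEquiv.coe_coe] at this
  rw [← this, LinearEquiv.symm_apply_apply]

-- Σ xᵢ ν(yᵢ) = 1
theorem e_id_nu (h : IsWeakBialgebra δ ε) (hν : IsAntipode δ ε ν) :
    LinearMap.mul' k A (TensorProduct.map LinearMap.id ν (δ 1)) = 1 := by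
  rw [hν.2.1 1]
  have := LinearMap.congr_fun h.counit_right 1
  simp only [LinearMap.coe_comp, Function.comp_apply, LinearEquiv.coe_coe, LinearMap.id_apply] at this
  show (TensorProduct.rid k A) (TensorProduct.map LinearMap.id ε (δ 1 * ((1:A) ⊗ₜ[k] (1:A)))) = 1
  rw [← Algebra.TensorProduct.one_def, mul_one, this]

-- Σ ν(xᵢ) yᵢ = 1
theorem nu_id_e (h : IsWeakBialgebra δ ε) (hν : IsAntipode δ ε ν) :
    LinearMap.mul' k A (TensorProduct.map ν LinearMap.id (δ 1)) = 1 := by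
  rw [hν.1 1]
  have := LinearMap.congr_fun h.counit_left 1
  simp only [LinearMap.coe_comp, Function.comp_apply, LinearEquiv.coe_coe, LinearMap.id_apply] at this
  show (TensorProduct.lid k A) (TensorProduct.map ε LinearMap.id (δ 1 * ((1:A) ⊗ₜ[k] (1:A)))) = 1
  rw [← Algebra.TensorProduct.one_def, mul_one, this]
-- δ(t a) = (t a ⊗ 1) * δ 1
theorem delta_t (h : IsWeakBialgebra δ ε) (a : A) :
    δ (targetMap δ ε a) = (targetMap δ ε a) ⊗ₜ[k] (1:A) * δ 1 := by
  have claim1 : δ ∘ₗ ((TensorProduct.lid k A).toLinearMap ∘ₗ TensorProduct.map ε LinearMap.id ∘ₗ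
        LinearMap.mulRight k (a ⊗ₜ[k] (1:A)))
      = ((TensorProduct.lid k (A ⊗[k] A)).toLinearMap ∘ₗ
          TensorProduct.map (ε ∘ₗ LinearMap.mulRight k a) LinearMap.id) ∘ₗ
        TensorProduct.map LinearMap.id δ := by
    apply TensorProduct.ext'
    intro x y
    simp [Algebra.TensorProduct.tmul_mul_tmul]
  have step1 : δ (targetMap δ ε a) =
      ((TensorProduct.lid k (A ⊗[k] A)).toLinearMap ∘ₗ
          TensorProduct.map (ε ∘ₗ LinearMap.mulRight k a) LinearMap.id)
        (TensorProduct.map LinearMap.id δ (δ 1)) :=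
    LinearMap.congr_fun claim1 (δ 1)
  rw [step1, ← LinearEquiv.apply_symm_apply (TensorProduct.assoc k A A A)
    (TensorProduct.map LinearMap.id δ (δ 1)), ← coassoc_e δ ε h, h.weak_unit₁]
  have claim2 : ∀ u w : A ⊗[k] A,
      ((TensorProduct.lid k (A ⊗[k] A)).toLinearMap ∘ₗ
          TensorProduct.map (ε ∘ₗ LinearMap.mulRight k a) LinearMap.id)
        (TensorProduct.assoc k A A A
          ((u ⊗ₜ[k] (1:A)) * ((TensorProduct.assoc k A A A).symm ((1:A) ⊗ₜ[k] w))))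
      = (((TensorProduct.lid k A).toLinearMap ∘ₗ TensorProduct.map ε LinearMap.id ∘ₗ
          LinearMap.mulRight k (a ⊗ₜ[k] (1:A))) u) ⊗ₜ[k] (1:A) * w := by
    intro u w
    induction u using TensorProduct.induction_on with
    | zero => simp
    | tmul x y =>
      induction w using TensorProduct.induction_on with
      | zero => simp
      | tmul p q =>
        simp [Algebra.TensorProduct.tmul_mul_tmul, TensorProduct.smul_tmul']
      | add w1 w2 h1 h2 =>
        simp only [TensorProduct.tmul_add, map_add, mul_add, h1, h2]
    | add u1 u2 h1 h2 =>
      simp only [TensorProduct.add_tmul, map_add, add_mul, h1, h2]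
  exact claim2 (δ 1) (δ 1)

-- δ(r a) = δ 1 * (1 ⊗ r a)
theorem delta_r (h : IsWeakBialgebra δ ε) (a : A) :
    δ (rMap δ ε a) = δ 1 * ((1:A) ⊗ₜ[k] rMap δ ε a) := by
  have claim1 : δ ∘ₗ ((TensorProduct.rid k A).toLinearMap ∘ₗ TensorProduct.map LinearMap.id ε ∘ₗ
        LinearMap.mulRight k ((1:A) ⊗ₜ[k] a))
      = ((TensorProduct.rid k (A ⊗[k] A)).toLinearMap ∘ₗ
          TensorProduct.map LinearMap.id (ε ∘ₗ LinearMap.mulRight k a)) ∘ₗ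
        TensorProduct.map δ LinearMap.id := by
    apply TensorProduct.ext'
    intro x y
    simp [Algebra.TensorProduct.tmul_mul_tmul]
  have step1 : δ (rMap δ ε a) =
      ((TensorProduct.rid k (A ⊗[k] A)).toLinearMap ∘ₗ
          TensorProduct.map LinearMap.id (ε ∘ₗ LinearMap.mulRight k a))
        (TensorProduct.map δ LinearMap.id (δ 1)) :=
    LinearMap.congr_fun claim1 (δ 1)
  rw [step1, h.weak_unit₁]
  have claim2 : ∀ u w : A ⊗[k] A,
      ((TensorProduct.rid k (A ⊗[k] A)).toLinearMap ∘ₗ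
          TensorProduct.map LinearMap.id (ε ∘ₗ LinearMap.mulRight k a))
        ((u ⊗ₜ[k] (1:A)) * ((TensorProduct.assoc k A A A).symm ((1:A) ⊗ₜ[k] w)))
      = u * ((1:A) ⊗ₜ[k] (((TensorProduct.rid k A).toLinearMap ∘ₗ
          TensorProduct.map LinearMap.id ε ∘ₗ LinearMap.mulRight k ((1:A) ⊗ₜ[k] a)) w)) := by
    intro u w
    induction u using TensorProduct.induction_on with
    | zero => simp
    | tmul x y =>
      induction w using TensorProduct.induction_on with
      | zero => simp
      | tmul p q =>
        simp [Algebra.TensorProduct.tmul_mul_tmul, TensorProduct.smul_tmul',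
          mul_smul_comm]
      | add w1 w2 h1 h2 =>
        simp only [TensorProduct.tmul_add, map_add, mul_add, h1, h2]
    | add u1 u2 h1 h2 =>
      simp only [TensorProduct.add_tmul, map_add, add_mul, h1, h2]
  exact claim2 (δ 1) (δ 1)
-- t = r
theorem t_eq_r (h : IsWeakBialgebra δ ε) (hν : IsAntipode δ ε ν) (c : A) :
    targetMap δ ε c = rMap δ ε c := by
  have ax2 := hν.2.1 (targetMap δ ε c)
  rw [r_t δ ε h c, delta_t δ ε h c] at ax2
  have key : (LinearMap.mul' k A ∘ₗ TensorProduct.map LinearMap.id ν ∘ₗ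
        LinearMap.mulLeft k ((targetMap δ ε c) ⊗ₜ[k] (1:A)))
      = LinearMap.mulLeft k (targetMap δ ε c) ∘ₗ LinearMap.mul' k A ∘ₗ
        TensorProduct.map LinearMap.id ν := by
    apply TensorProduct.ext'
    intro x y
    simp [Algebra.TensorProduct.tmul_mul_tmul, mul_assoc]
  have := LinearMap.congr_fun key (δ 1)
  simp only [LinearMap.coe_comp, Function.comp_apply, LinearMap.mulLeft_apply] at this
  rw [this, e_id_nu δ ε ν h hν, mul_one] at ax2
  exact ax2
/-- Convolution product. -/
def conv (δ : A →ₗ[k] A ⊗[k] A) (f g : A →ₗ[k] A) : A →ₗ[k] A :=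
  LinearMap.mul' k A ∘ₗ TensorProduct.map f g ∘ₗ δ

theorem conv_apply (f g : A →ₗ[k] A) (a : A) :
    conv δ f g a = LinearMap.mul' k A (TensorProduct.map f g (δ a)) := rfl

theorem map_conv_left (f g h' : A →ₗ[k] A) (u : A ⊗[k] A) :
    TensorProduct.map (conv δ f g) h' u =
      TensorProduct.map (LinearMap.mul' k A) LinearMap.id
        (TensorProduct.map (TensorProduct.map f g) h'
          (TensorProduct.map δ LinearMap.id u)) := by
  induction u using TensorProduct.induction_on with
  | zero => simp
  | tmul x y => simp [conv]
  | add u1 u2 h1 h2 => simp [h1, h2]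

theorem map_conv_right (f g h' : A →ₗ[k] A) (u : A ⊗[k] A) :
    TensorProduct.map f (conv δ g h') u =
      TensorProduct.map LinearMap.id (LinearMap.mul' k A)
        (TensorProduct.map f (TensorProduct.map g h')
          (TensorProduct.map LinearMap.id δ u)) := by
  induction u using TensorProduct.induction_on with
  | zero => simp
  | tmul x y => simp [conv]
  | add u1 u2 h1 h2 => simp [h1, h2]

theorem conv_assoc (h : IsWeakBialgebra δ ε) (f g h' : A →ₗ[k] A) :
    conv δ (conv δ f g) h' = conv δ f (conv δ g h') := by
  apply LinearMap.ext
  intro a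
  rw [conv_apply, conv_apply, map_conv_left, map_conv_right]
  have hco : TensorProduct.map δ LinearMap.id (δ a) =
      (TensorProduct.assoc k A A A).symm (TensorProduct.map LinearMap.id δ (δ a)) := by
    have := LinearMap.congr_fun h.coassoc a
    simp only [LinearMap.coe_comp, Function.comp_apply, LinearEquiv.coe_coe] at this
    rw [← this, LinearEquiv.symm_apply_apply]
  rw [hco]
  have key : (LinearMap.mul' k A ∘ₗ TensorProduct.map (LinearMap.mul' k A) LinearMap.id ∘ₗ
        TensorProduct.map (TensorProduct.map f g) h' ∘ₗ
        (TensorProduct.assoc k A A A).symm.toLinearMap)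
      = LinearMap.mul' k A ∘ₗ TensorProduct.map LinearMap.id (LinearMap.mul' k A) ∘ₗ
        TensorProduct.map f (TensorProduct.map g h') := by
    apply TensorProduct.ext'
    intro x w
    induction w using TensorProduct.induction_on with
    | zero => simp only [TensorProduct.tmul_zero, map_zero]
    | tmul y z => simp [mul_assoc]
    | add w1 w2 h1 h2 => simp only [TensorProduct.tmul_add, map_add, h1, h2]
  exact LinearMap.congr_fun key (TensorProduct.map LinearMap.id δ (δ a))

theorem nu_eq_conv_nu_r (h : IsWeakBialgebra δ ε) (hν : IsAntipode δ ε ν) :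
    ν = conv δ ν (rMap δ ε) := by
  have h1 : conv δ LinearMap.id ν = rMap δ ε := LinearMap.ext fun a => hν.2.1 a
  have h2 : conv δ (conv δ ν LinearMap.id) ν = ν := by
    apply LinearMap.ext
    intro a
    rw [conv_apply, map_conv_left]
    exact hν.2.2 a
  rw [← h1, ← conv_assoc δ ε h, h2]

theorem t_nu (h : IsWeakBialgebra δ ε) (hν : IsAntipode δ ε ν) (a : A) :
    targetMap δ ε (ν a) = targetMap δ ε a := by
  have h0 : ν a = conv δ ν (rMap δ ε) a := by rw [← nu_eq_conv_nu_r δ ε ν h hν]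
  rw [h0, conv_apply]
  have key : (targetMap δ ε ∘ₗ LinearMap.mul' k A ∘ₗ TensorProduct.map ν (rMap δ ε))
      = targetMap δ ε ∘ₗ LinearMap.mul' k A ∘ₗ TensorProduct.map ν LinearMap.id := by
    apply TensorProduct.ext'
    intro x y
    simp only [LinearMap.coe_comp, Function.comp_apply, TensorProduct.map_tmul,
      LinearMap.mul'_apply, LinearMap.id_coe, id_eq]
    exact t_mul_r δ ε h (ν x) y
  have := LinearMap.congr_fun key (δ a)
  simp only [LinearMap.coe_comp, Function.comp_apply] at this
  rw [this, hν.1 a, t_t δ ε h a]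
theorem map_delta_mul_left (h : IsWeakBialgebra δ ε) (b : A) (u : A ⊗[k] A) :
    TensorProduct.map δ LinearMap.id ((b ⊗ₜ[k] (1:A)) * u) =
      (δ b ⊗ₜ[k] (1:A)) * TensorProduct.map δ LinearMap.id u := by
  induction u using TensorProduct.induction_on with
  | zero => simp
  | tmul x y =>
    simp [Algebra.TensorProduct.tmul_mul_tmul, h.mul_compat]
  | add u1 u2 h1 h2 => simp only [mul_add, map_add, h1, h2]

theorem e_absorb (h : IsWeakBialgebra δ ε) :
    (δ 1 ⊗ₜ[k] (1:A)) * TensorProduct.map δ LinearMap.id (δ 1) =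
      TensorProduct.map δ LinearMap.id (δ 1) := by
  rw [h.weak_unit₁, ← mul_assoc, Algebra.TensorProduct.tmul_mul_tmul, e_idem δ ε h, mul_one]

theorem nu_t (h : IsWeakBialgebra δ ε) (hν : IsAntipode δ ε ν) (a : A) :
    ν (targetMap δ ε a) = targetMap δ ε a := by
  have ax3 := hν.2.2 (targetMap δ ε a)
  rw [delta_t δ ε h a, map_delta_mul_left δ ε h, delta_t δ ε h a] at ax3
  rw [show ((targetMap δ ε a ⊗ₜ[k] (1:A)) * δ 1) ⊗ₜ[k] (1:A) =
      ((targetMap δ ε a ⊗ₜ[k] (1:A)) ⊗ₜ[k] (1:A)) * (δ 1 ⊗ₜ[k] (1:A)) by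
    rw [Algebra.TensorProduct.tmul_mul_tmul, mul_one], mul_assoc,
    e_absorb δ ε h, h.weak_unit₁] at ax3
  have key : ∀ (u w : A ⊗[k] A),
      LinearMap.mul' k A (TensorProduct.map (LinearMap.mul' k A) LinearMap.id
        (TensorProduct.map (TensorProduct.map ν LinearMap.id) ν
          (((targetMap δ ε a ⊗ₜ[k] (1:A)) ⊗ₜ[k] (1:A)) *
            ((u ⊗ₜ[k] (1:A)) * ((TensorProduct.assoc k A A A).symm ((1:A) ⊗ₜ[k] w))))))
      = LinearMap.mul' k A (TensorProduct.map ν LinearMap.id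
          ((targetMap δ ε a ⊗ₜ[k] (1:A)) * u)) *
        LinearMap.mul' k A (TensorProduct.map LinearMap.id ν w) := by
    intro u w
    induction u using TensorProduct.induction_on with
    | zero => simp
    | tmul x y =>
      induction w using TensorProduct.induction_on with
      | zero => simp
      | tmul p q =>
        simp [Algebra.TensorProduct.tmul_mul_tmul, mul_assoc]
      | add w1 w2 h1 h2 =>
        simp only [TensorProduct.tmul_add, map_add, mul_add, h1, h2]
    | add u1 u2 h1 h2 =>
      simp only [TensorProduct.add_tmul, map_add, add_mul, mul_add, h1, h2]
  rw [key (δ 1) (δ 1), e_id_nu δ ε ν h hν, mul_one, ← delta_t δ ε h a,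
    hν.1 (targetMap δ ε a), t_t δ ε h a] at ax3
  exact ax3.symm
end Aux

/-- For the antipode of a weak Hopf algebra:
`ν∘t = r∘ν = r∘t` and `ν∘r = t∘ν = t∘r`. -/
theorem antipode_target_r (δ : A →ₗ[k] A ⊗[k] A) (ε : A →ₗ[k] k) (ν : A →ₗ[k] A)
    (h : IsWeakBialgebra δ ε) (hν : IsAntipode δ ε ν) :
    ν ∘ₗ targetMap δ ε = rMap δ ε ∘ₗ ν ∧
    rMap δ ε ∘ₗ ν = rMap δ ε ∘ₗ targetMap δ ε ∧
    ν ∘ₗ rMap δ ε = targetMap δ ε ∘ₗ ν ∧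
    targetMap δ ε ∘ₗ ν = targetMap δ ε ∘ₗ rMap δ ε := by
  refine ⟨?_, ?_, ?_, ?_⟩
  · apply LinearMap.ext; intro a
    simp only [LinearMap.coe_comp, Function.comp_apply]
    rw [nu_t δ ε ν h hν a, ← t_eq_r δ ε ν h hν (ν a), t_nu δ ε ν h hν a]
  · apply LinearMap.ext; intro a
    simp only [LinearMap.coe_comp, Function.comp_apply]
    rw [← t_eq_r δ ε ν h hν (ν a), t_nu δ ε ν h hν a, r_t δ ε h a,
      ← t_eq_r δ ε ν h hν a]
  · apply LinearMap.ext; intro a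
    simp only [LinearMap.coe_comp, Function.comp_apply]
    rw [← t_eq_r δ ε ν h hν a, nu_t δ ε ν h hν a, t_nu δ ε ν h hν a]
  · apply LinearMap.ext; intro a
    simp only [LinearMap.coe_comp, Function.comp_apply]
    rw [t_nu δ ε ν h hν a, t_r δ ε h a]

end
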